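/- arXiv:1904.00703 — 4 statements merged into one kernel-verified Lean document; each statement's English description precedes it below -/
import Mathlib

section
/- Let A be a zero-dimensional local commutative K-algebra with maximal ideal m, q an m-primary ideal, R = A/q, π the quotient map. Suppose g ∈ A with π(g) a non-zero socle element of R, and h ∈ Ann_A(q) with gh ≠ 0. Then the kernel of multiplication by h restricted to the principal ideal (g), i.e. {f ∈ (g) | fh = 0}, is contained in q. -/
/- STATEMENT 4: With A Artinian local with maximal ideal m, q an m-primary ideal,
R = A/q, π the quotient map, g ∈ A with π(g) a non-zero socle element of R, and
h ∈ Ann_A(q) with gh ≠ 0: the kernel of multiplication by h restricted to the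
principal ideal (g), i.e. {f ∈ (g) | fh = 0}, is contained in q. -/
theorem ker_mul_of_principal_subset_primary
    (K A : Type*) [Field K] [CommRing A] [Algebra K A]
    [IsArtinianRing A] [IsLocalRing A]
    (q : Ideal A) (hq : q.radical = IsLocalRing.maximalIdeal A)
    (g : A) (hg_ne : g ∉ q)
    (hg_socle : ∀ a ∈ IsLocalRing.maximalIdeal A, g * a ∈ q)
    (h : A) (hh : ∀ a ∈ q, h * a = 0) (hgh : g * h ≠ 0) :
    ∀ f ∈ Ideal.span {g}, f * h = 0 → f ∈ q := by
  intro f hf hfh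
  obtain ⟨c, rfl⟩ := Ideal.mem_span_singleton'.mp hf
  by_cases hc : IsUnit c
  · exfalso
    obtain ⟨u, rfl⟩ := hc
    apply hgh
    have := congrArg (fun x => (↑u⁻¹ : A) * x) hfh
    simpa [mul_comm, mul_assoc, mul_left_comm] using this
  · have := hg_socle c (by rwa [IsLocalRing.mem_maximalIdeal])
    rwa [mul_comm] at this
end

section
/- Let A be a zero-dimensional local commutative K-algebra with maximal ideal m, q an m-primary ideal, R = A/q, π the quotient map. Suppose g ∈ A with π(g) a non-zero socle element of R, and h ∈ Ann_A(q) with gh ≠ 0. If g₁, ..., g_r ∈ A \ {0} are such that π(g₁), ..., π(g_r) lie in the principal ideal (π(g)) of R and are K-linearly independent, then g₁h, ..., g_rh are K-linearly independent in A. -/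
/-! Write `x = ∑ cᵢ gᵢ` for a relation `∑ cᵢ gᵢ h = 0`; since `π x ∈ (π g)`, `π x = π (u g)`
for some `u`. If `u` were a unit, then `h` killing `q ∋ u g - x` would give `u g h = x h = 0`,
hence `g h = 0`; so `u ∈ m`, and then `u g ∈ q` because `π g` is in the socle. Thus `π x = 0`,
and the independence of the `π gᵢ` forces all `cᵢ = 0`. -/

open IsLocalRing

theorem Ideal.mem_of_mk_mem_span_singleton_of_mul_eq_zero {A : Type*} [CommRing A]
    [IsLocalRing A] {q : Ideal A} {g h y : A}
    (hg_socle : ∀ a ∈ maximalIdeal A, g * a ∈ q) (hh : ∀ a ∈ q, h * a = 0) (hgh : g * h ≠ 0)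
    (hy : Ideal.Quotient.mk q y ∈ Ideal.span {Ideal.Quotient.mk q g}) (hyh : y * h = 0) :
    y ∈ q := by
  obtain ⟨z, hz⟩ := Ideal.mem_span_singleton'.mp hy
  obtain ⟨u, rfl⟩ := Ideal.Quotient.mk_surjective z
  have hdiff : u * g - y ∈ q := Ideal.Quotient.eq.mp (by rwa [map_mul])
  by_cases hu : u ∈ maximalIdeal A
  · have hug : u * g ∈ q := mul_comm g u ▸ hg_socle u hu
    simpa using sub_mem hug hdiff
  · have hugh : u * (g * h) = 0 := by
      linear_combination hh _ hdiff + hyh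
    exact absurd ((notMem_maximalIdeal.mp hu).mul_right_eq_zero.mp hugh) hgh

theorem linearIndependent_mul_annihilator_general
    (K A : Type*) [Field K] [CommRing A] [Algebra K A]
    [IsLocalRing A]
    (q : Ideal A)
    (g : A)
    (hg_socle : ∀ a ∈ IsLocalRing.maximalIdeal A, g * a ∈ q)
    (h : A) (hh : ∀ a ∈ q, h * a = 0) (hgh : g * h ≠ 0)
    (r : ℕ) (gs : Fin r → A)
    (hgs_mem : ∀ i, Ideal.Quotient.mk q (gs i) ∈ Ideal.span {Ideal.Quotient.mk q g})
    (hli : LinearIndependent K (fun i => Ideal.Quotient.mk q (gs i))) :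
    LinearIndependent K (fun i => gs i * h) := by
  rw [Fintype.linearIndependent_iff] at hli ⊢
  intro c hc
  set x : A := ∑ i, c i • gs i
  have hxh : x * h = 0 := by simpa only [x, Finset.sum_mul, smul_mul_assoc] using hc
  have hπx : Ideal.Quotient.mk q x = ∑ i, c i • Ideal.Quotient.mk q (gs i) := by
    simp only [x, map_sum, ← Ideal.Quotient.mkₐ_eq_mk K, map_smul]
  have hx_mem : Ideal.Quotient.mk q x ∈ Ideal.span {Ideal.Quotient.mk q g} :=
    hπx ▸ Submodule.sum_mem _ fun i _ => Submodule.smul_of_tower_mem _ (c i) (hgs_mem i)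
  refine hli c ?_
  rw [← hπx, Ideal.Quotient.eq_zero_iff_mem]
  exact Ideal.mem_of_mk_mem_span_singleton_of_mul_eq_zero hg_socle hh hgh hx_mem hxh

theorem linearIndependent_mul_annihilator
    (K A : Type*) [Field K] [CommRing A] [Algebra K A]
    [IsArtinianRing A] [IsLocalRing A]
    (q : Ideal A) (hq : q.radical = IsLocalRing.maximalIdeal A)
    (g : A) (hg_ne : g ∉ q)
    (hg_socle : ∀ a ∈ IsLocalRing.maximalIdeal A, g * a ∈ q)
    (h : A) (hh : ∀ a ∈ q, h * a = 0) (hgh : g * h ≠ 0)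
    (r : ℕ) (gs : Fin r → A) (hgs_ne : ∀ i, gs i ≠ 0)
    (hgs_mem : ∀ i, Ideal.Quotient.mk q (gs i) ∈ Ideal.span {Ideal.Quotient.mk q g})
    (hli : LinearIndependent K (fun i => Ideal.Quotient.mk q (gs i))) :
    LinearIndependent K (fun i => gs i * h) :=
  linearIndependent_mul_annihilator_general K A q g hg_socle h hh hgh r gs hgs_mem hli
end

section
/- Let R be a standard graded algebra over a field K which is a one-dimensional Cohen-Macaulay ring with a homogeneous non-zerodivisor x₀ of degree 1, such that dim_K R_i stabilizes to a value deg(X) for i ≫ 0. Then the graded module ω = Hom_{K[x₀]}(R, K[x₀]) (graded Hom over the polynomial subring K[x₀]) satisfies dim_K ω_i = deg(X) − dim_K R_{−i−1} for all i ∈ ℤ. -/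
/-!
Fix a degree `N ≥ rX` with `N + i ≥ 0`. Because `x₀` is regular and `x₀ R_m = R_{m+1}` for
`m ≥ N`, each `R_j` embeds into `R_N` by `a ↦ b` with `x₀ ^ j b = x₀ ^ N a`, compatibly with
multiplication by `x₀`. A `K[x₀]`-linear `φ` of degree `i` is therefore determined by the
functional `coeff_{N+i} ∘ φ` on `R_N`, and a functional on `R_N` arises in this way exactly when it
kills the images of the `R_j` with `j + i < 0`; these images together form the image of
`R_{-i-1}`. Hence `dim ω_i = dim R_N - dim R_{-i-1} = deg X - dim R_{-i-1}`.
-/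

open Polynomial Module

theorem map_pow_mul_of_map_mul {M S : Type*} [Monoid M] [Monoid S] {f : M → S} {x : M} {y : S}
    (hf : ∀ r, f (x * r) = y * f r) (k : ℕ) (r : M) : f (x ^ k * r) = y ^ k * f r := by
  induction k with
  | zero => simp
  | succ k ih => rw [pow_succ', mul_assoc, hf, ih, ← mul_assoc, ← pow_succ']

theorem Polynomial.eq_zero_of_mem_span_X_pow {K : Type*} [Semiring K] {k : ℤ} {p : K[X]}
    (hp : p ∈ Submodule.span K {q : K[X] | ∃ m : ℕ, (m : ℤ) = k ∧ q = X ^ m})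
    (hk : ∀ n : ℕ, (n : ℤ) = k → p.coeff n = 0) : p = 0 := by
  ext n
  rw [coeff_zero]
  by_cases hn : (n : ℤ) = k
  · exact hk n hn
  clear hk
  induction hp using Submodule.span_induction with
  | mem q hq =>
    obtain ⟨m, rfl, rfl⟩ := hq
    rw [coeff_X_pow, if_neg (by omega)]
  | zero => rw [coeff_zero]
  | add p q _ _ hp hq => rw [coeff_add, hp, hq, add_zero]
  | smul c p _ hp => rw [coeff_smul, hp, smul_zero]

structure IsStableRegular {K R : Type*} [CommSemiring K] [Semiring R] [Algebra K R]
    (𝒜 : ℕ → Submodule K R) (x₀ : R) (N : ℕ) : Prop where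
  mem : x₀ ∈ 𝒜 1
  isLeftRegular : IsLeftRegular x₀
  exists_eq_mul : ∀ m ≥ N, ∀ a ∈ 𝒜 (m + 1), ∃ b ∈ 𝒜 m, a = x₀ * b

namespace IsStableRegular

variable {K R : Type*} [CommSemiring K] [CommSemiring R] [Algebra K R]
  {𝒜 : ℕ → Submodule K R} {x₀ : R} {N : ℕ}

theorem exists_eq_pow_mul (h : IsStableRegular 𝒜 x₀ N) (k : ℕ) :
    ∀ a ∈ 𝒜 (N + k), ∃ b ∈ 𝒜 N, a = x₀ ^ k * b := by
  induction k with
  | zero => exact fun a ha => ⟨a, ha, by rw [pow_zero, one_mul]⟩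
  | succ k ih =>
    intro a ha
    obtain ⟨c, hc, rfl⟩ := h.exists_eq_mul (N + k) (Nat.le_add_right N k) a ha
    obtain ⟨b, hb, rfl⟩ := ih c hc
    exact ⟨b, hb, by rw [pow_succ', mul_assoc]⟩

variable [GradedAlgebra 𝒜]

theorem pow_mem (h : IsStableRegular 𝒜 x₀ N) (k : ℕ) : x₀ ^ k ∈ 𝒜 k := by
  simpa using SetLike.pow_mem_graded k h.mem

noncomputable def mulPowEquiv (h : IsStableRegular 𝒜 x₀ N) (k : ℕ) : 𝒜 N ≃ₗ[K] 𝒜 (N + k) :=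
  LinearEquiv.ofBijective
    ((LinearMap.mulLeft K (x₀ ^ k)).restrict fun a ha => by
      rw [add_comm]
      exact SetLike.mul_mem_graded (h.pow_mem k) ha)
    ⟨fun _ _ hab => Subtype.ext (h.isLeftRegular.pow k (congrArg Subtype.val hab)),
      fun c =>
        let ⟨b, hb, hc⟩ := h.exists_eq_pow_mul k c c.2
        ⟨⟨b, hb⟩, Subtype.ext hc.symm⟩⟩

/-- `a ↦ b` with `x₀ ^ j * b = x₀ ^ N * a`. -/
noncomputable def toStable (h : IsStableRegular 𝒜 x₀ N) (j : ℕ) : 𝒜 j →ₗ[K] 𝒜 N :=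
  (h.mulPowEquiv j).symm.toLinearMap ∘ₗ
    (LinearMap.mulLeft K (x₀ ^ N)).restrict fun _ ha => SetLike.mul_mem_graded (h.pow_mem N) ha

theorem pow_mul_toStable (h : IsStableRegular 𝒜 x₀ N) {j : ℕ} (a : 𝒜 j) :
    x₀ ^ j * (h.toStable j a : R) = x₀ ^ N * a :=
  congrArg Subtype.val ((h.mulPowEquiv j).apply_symm_apply _)

theorem toStable_eq_of_pow_mul_eq (h : IsStableRegular 𝒜 x₀ N) {j : ℕ} {a : 𝒜 j} {b : 𝒜 N}
    (hb : x₀ ^ j * (b : R) = x₀ ^ N * a) : h.toStable j a = b :=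
  Subtype.ext (h.isLeftRegular.pow j ((h.pow_mul_toStable a).trans hb.symm))

theorem toStable_self (h : IsStableRegular 𝒜 x₀ N) (a : 𝒜 N) : h.toStable N a = a :=
  h.toStable_eq_of_pow_mul_eq rfl

theorem toStable_mul (h : IsStableRegular 𝒜 x₀ N) {j : ℕ} (a : 𝒜 j)
    (ha : x₀ * (a : R) ∈ 𝒜 (j + 1)) : h.toStable (j + 1) ⟨x₀ * a, ha⟩ = h.toStable j a :=
  h.toStable_eq_of_pow_mul_eq <| by
    rw [pow_succ', mul_assoc, h.pow_mul_toStable, mul_left_comm]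

theorem toStable_injective (h : IsStableRegular 𝒜 x₀ N) (j : ℕ) :
    Function.Injective (h.toStable j) := fun a b hab =>
  Subtype.ext <| h.isLeftRegular.pow N <| show x₀ ^ N * (a : R) = x₀ ^ N * b by
    rw [← h.pow_mul_toStable, hab, h.pow_mul_toStable]

theorem range_toStable_mono (h : IsStableRegular 𝒜 x₀ N) {j k : ℕ} (hjk : j ≤ k) :
    LinearMap.range (h.toStable j) ≤ LinearMap.range (h.toStable k) := by
  rintro _ ⟨a, rfl⟩
  have hmem : x₀ ^ (k - j) * (a : R) ∈ 𝒜 k := by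
    simpa [Nat.sub_add_cancel hjk] using SetLike.mul_mem_graded (h.pow_mem (k - j)) a.2
  refine ⟨⟨_, hmem⟩, h.toStable_eq_of_pow_mul_eq ?_⟩
  calc x₀ ^ k * (h.toStable j a : R) = x₀ ^ (k - j) * (x₀ ^ j * h.toStable j a) := by
        rw [← mul_assoc, ← pow_add, Nat.sub_add_cancel hjk]
    _ = x₀ ^ N * (x₀ ^ (k - j) * a) := by
        rw [h.pow_mul_toStable, mul_left_comm]

theorem pow_mul_map_toStable (h : IsStableRegular 𝒜 x₀ N) {S : Type*} [Monoid S] {f : R → S}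
    {y : S} (hf : ∀ r, f (x₀ * r) = y * f r) {j : ℕ} (a : 𝒜 j) :
    y ^ j * f (h.toStable j a) = y ^ N * f a := by
  rw [← map_pow_mul_of_map_mul hf, ← map_pow_mul_of_map_mul hf, h.pow_mul_toStable]

end IsStableRegular

section Dimension

variable {K R : Type*} [Field K] [CommRing R] [Algebra K R]
  {𝒜 : ℕ → Submodule K R} {x₀ : R} {N : ℕ}

/-- The degree `i` part of `ω = Hom_{K[x₀]}(R, K[x₀])`. -/
def canonicalPiece (𝒜 : ℕ → Submodule K R) (x₀ : R) (i : ℤ) :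
    Submodule K (R →ₗ[K] K[X]) where
  carrier := {φ | (∀ r : R, φ (x₀ * r) = X * φ r) ∧
    ∀ j : ℕ, ∀ a ∈ 𝒜 j,
      φ a ∈ Submodule.span K {p : K[X] | ∃ m : ℕ, (m : ℤ) = (j : ℤ) + i ∧ p = X ^ m}}
  add_mem' := by
    rintro φ ψ ⟨hφ, hφ'⟩ ⟨hψ, hψ'⟩
    exact ⟨fun r => by simp only [LinearMap.add_apply, hφ, hψ, mul_add],
      fun j a ha => add_mem (hφ' j a ha) (hψ' j a ha)⟩
  zero_mem' := ⟨fun r => by simp, fun j a _ => zero_mem _⟩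
  smul_mem' := by
    rintro c φ ⟨hφ, hφ'⟩
    exact ⟨fun r => by simp only [LinearMap.smul_apply, hφ, mul_smul_comm],
      fun j a ha => Submodule.smul_mem _ c (hφ' j a ha)⟩

namespace canonicalPiece

variable {i : ℤ} {φ : R →ₗ[K] K[X]}

theorem map_eq_zero_of_add_neg (hφ : φ ∈ canonicalPiece 𝒜 x₀ i) {j : ℕ}
    (hj : (j : ℤ) + i < 0) {a : R} (ha : a ∈ 𝒜 j) : φ a = 0 :=
  eq_zero_of_mem_span_X_pow (hφ.2 j a ha) fun n hn => by omega

end canonicalPiece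

/-- On `R_N` the values of `φ` are multiples of `X ^ (N + i)`; this map records the multiplier. -/
noncomputable def coeffRestrict (𝒜 : ℕ → Submodule K R) (x₀ : R) (i : ℤ) (N : ℕ) :
    canonicalPiece 𝒜 x₀ i →ₗ[K] Dual K (𝒜 N) :=
  LinearMap.llcomp K (𝒜 N) K[X] K (lcoeff K ((N : ℤ) + i).toNat) ∘ₗ
    LinearMap.lcomp K K[X] (𝒜 N).subtype ∘ₗ (canonicalPiece 𝒜 x₀ i).subtype

theorem coeffRestrict_apply {i : ℤ} (φ : canonicalPiece 𝒜 x₀ i) (a : 𝒜 N) :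
    coeffRestrict 𝒜 x₀ i N φ a = ((φ : R →ₗ[K] K[X]) a).coeff ((N : ℤ) + i).toNat :=
  rfl

variable [GradedAlgebra 𝒜]

namespace IsStableRegular

theorem map_toStable_eq_zero_iff (h : IsStableRegular 𝒜 x₀ N) {i : ℤ} {φ : R →ₗ[K] K[X]}
    (hφ : φ ∈ canonicalPiece 𝒜 x₀ i) {j : ℕ} (a : 𝒜 j) : φ (h.toStable j a) = 0 ↔ φ a = 0 := by
  have key := h.pow_mul_map_toStable hφ.1 a
  constructor <;> intro h0 <;> simpa [h0, X_ne_zero] using key.symm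

variable (i : ℤ)

noncomputable def lowDegreeImage (h : IsStableRegular 𝒜 x₀ N) : Submodule K (𝒜 N) :=
  ⨆ (j : ℕ) (_ : (j : ℤ) + i < 0), LinearMap.range (h.toStable j)

theorem mem_dualAnnihilator_lowDegreeImage (h : IsStableRegular 𝒜 x₀ N) {ψ : Dual K (𝒜 N)} :
    ψ ∈ (h.lowDegreeImage i).dualAnnihilator ↔
      ∀ j : ℕ, (j : ℤ) + i < 0 → ∀ a, ψ (h.toStable j a) = 0 := by
  simp only [lowDegreeImage, Submodule.dualAnnihilator_iSup_eq, Submodule.mem_iInf,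
    Submodule.mem_dualAnnihilator, LinearMap.mem_range, forall_exists_index,
    forall_apply_eq_imp_iff]

theorem finrank_lowDegreeImage (h : IsStableRegular 𝒜 x₀ N) :
    finrank K (h.lowDegreeImage i) = if 0 ≤ -i - 1 then finrank K (𝒜 (-i - 1).toNat) else 0 := by
  split_ifs with hi
  · have : h.lowDegreeImage i = LinearMap.range (h.toStable (-i - 1).toNat) :=
      le_antisymm (iSup₂_le fun j hj => h.range_toStable_mono (by omega))
        (le_iSup₂_of_le (-i - 1).toNat (by omega) le_rfl)
    rw [this, LinearMap.finrank_range_of_inj (h.toStable_injective _)]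
  · have : h.lowDegreeImage i = ⊥ := iSup₂_eq_bot.mpr fun j hj => by omega
    rw [this, finrank_bot]

noncomputable def extend (h : IsStableRegular 𝒜 x₀ N) (ψ : Dual K (𝒜 N)) : R →ₗ[K] K[X] :=
  DirectSum.toModule K ℕ K[X]
      (fun j => (ψ ∘ₗ h.toStable j).smulRight (X ^ ((j : ℤ) + i).toNat)) ∘ₗ
    (DirectSum.decomposeLinearEquiv 𝒜).toLinearMap

theorem extend_apply_coe (h : IsStableRegular 𝒜 x₀ N) (ψ : Dual K (𝒜 N)) {j : ℕ} (a : 𝒜 j) :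
    h.extend i ψ a = ψ (h.toStable j a) • X ^ ((j : ℤ) + i).toNat := by
  simp [extend]

theorem extend_mem (h : IsStableRegular 𝒜 x₀ N) {ψ : Dual K (𝒜 N)}
    (hψ : ψ ∈ (h.lowDegreeImage i).dualAnnihilator) :
    h.extend i ψ ∈ canonicalPiece 𝒜 x₀ i := by
  rw [mem_dualAnnihilator_lowDegreeImage] at hψ
  have hmul : h.extend i ψ ∘ₗ LinearMap.mulLeft K x₀ = LinearMap.mulLeft K X ∘ₗ h.extend i ψ := by
    refine DirectSum.decompose_lhom_ext 𝒜 fun j => LinearMap.ext fun a => ?_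
    have ha : x₀ * (a : R) ∈ 𝒜 (j + 1) := add_comm 1 j ▸ SetLike.mul_mem_graded h.mem a.2
    change h.extend i ψ (⟨x₀ * a, ha⟩ : 𝒜 (j + 1)) = X * h.extend i ψ a
    rw [h.extend_apply_coe, h.extend_apply_coe, h.toStable_mul]
    rcases lt_or_ge ((j : ℤ) + i) 0 with hj | hj
    · rw [hψ j hj, zero_smul, zero_smul, mul_zero]
    · rw [mul_smul_comm, ← pow_succ']
      congr 2
      omega
  refine ⟨fun r => LinearMap.congr_fun hmul r, fun j a ha => ?_⟩
  rw [show a = ((⟨a, ha⟩ : 𝒜 j) : R) from rfl, h.extend_apply_coe]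
  rcases lt_or_ge ((j : ℤ) + i) 0 with hj | hj
  · rw [hψ j hj, zero_smul]
    exact zero_mem _
  · exact Submodule.smul_mem _ _ (Submodule.subset_span ⟨_, by omega, rfl⟩)

theorem coeffRestrict_extend (h : IsStableRegular 𝒜 x₀ N) {ψ : Dual K (𝒜 N)}
    (hψ : ψ ∈ (h.lowDegreeImage i).dualAnnihilator) :
    coeffRestrict 𝒜 x₀ i N ⟨h.extend i ψ, h.extend_mem i hψ⟩ = ψ := by
  ext a
  rw [coeffRestrict_apply, h.extend_apply_coe, h.toStable_self, coeff_smul, coeff_X_pow_self,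
    smul_eq_mul, mul_one]

theorem coeffRestrict_injective (h : IsStableRegular 𝒜 x₀ N) (hNi : 0 ≤ (N : ℤ) + i) :
    Function.Injective (coeffRestrict 𝒜 x₀ i N) := by
  refine (injective_iff_map_eq_zero _).mpr fun ⟨φ, hφ⟩ hzero => Subtype.ext ?_
  have hstable (a : 𝒜 N) : φ a = 0 :=
    eq_zero_of_mem_span_X_pow (hφ.2 N a a.2) fun n hn => by
      rw [show n = ((N : ℤ) + i).toNat by omega]
      exact LinearMap.congr_fun hzero a
  refine DirectSum.decompose_lhom_ext 𝒜 fun j => LinearMap.ext fun a => ?_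
  exact (h.map_toStable_eq_zero_iff hφ a).mp (hstable _)

theorem range_coeffRestrict (h : IsStableRegular 𝒜 x₀ N) :
    LinearMap.range (coeffRestrict 𝒜 x₀ i N) = (h.lowDegreeImage i).dualAnnihilator := by
  refine le_antisymm ?_ fun ψ hψ => ⟨_, h.coeffRestrict_extend i hψ⟩
  rintro _ ⟨⟨φ, hφ⟩, rfl⟩
  refine (h.mem_dualAnnihilator_lowDegreeImage i).mpr fun j hj a => ?_
  rw [coeffRestrict_apply, (h.map_toStable_eq_zero_iff hφ a).mpr
    (canonicalPiece.map_eq_zero_of_add_neg hφ hj a.2), coeff_zero]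

theorem finrank_canonicalPiece_add (h : IsStableRegular 𝒜 x₀ N) [FiniteDimensional K (𝒜 N)]
    (hNi : 0 ≤ (N : ℤ) + i) :
    finrank K (canonicalPiece 𝒜 x₀ i) + finrank K (h.lowDegreeImage i) = finrank K (𝒜 N) := by
  rw [← Subspace.finrank_add_finrank_dualAnnihilator_eq (h.lowDegreeImage i), add_comm,
    ← h.range_coeffRestrict i, LinearMap.finrank_range_of_inj (h.coeffRestrict_injective i hNi)]

end IsStableRegular

end Dimension

theorem hilbertFunction_dual_canonical
    (K R : Type*) [Field K] [CommRing R] [Algebra K R]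
    (𝒜 : ℕ → Submodule K R) [GradedAlgebra 𝒜]
    [∀ i, FiniteDimensional K (𝒜 i)]
    (x₀ : R) (hx₀ : x₀ ∈ 𝒜 1)
    (hnzd : ∀ a : R, x₀ * a = 0 → a = 0)
    (D rX : ℕ)
    (hD : ∀ i ≥ rX, Module.finrank K (𝒜 i) = D)
    (hstab : ∀ i ≥ rX, ∀ a ∈ 𝒜 (i + 1), ∃ b ∈ 𝒜 i, a = x₀ * b)
    (i : ℤ) :
    Module.finrank K (Submodule.span K
        {φ : R →ₗ[K] Polynomial K |
          (∀ r : R, φ (x₀ * r) = Polynomial.X * φ r) ∧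
          ∀ j : ℕ, ∀ a ∈ 𝒜 j,
            φ a ∈ Submodule.span K
              {p : Polynomial K | ∃ m : ℕ, (m : ℤ) = (j : ℤ) + i ∧ p = Polynomial.X ^ m}})
      + (if h : 0 ≤ -i - 1 then Module.finrank K (𝒜 (-i - 1).toNat) else 0)
      = D := by
  have h : IsStableRegular 𝒜 x₀ (rX + i.natAbs) :=
    ⟨hx₀, isLeftRegular_iff_right_eq_zero_of_mul.mpr hnzd, fun m hm => hstab m (by omega)⟩
  change finrank K (Submodule.span K (canonicalPiece 𝒜 x₀ i : Set (R →ₗ[K] K[X]))) + _ = D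
  rw [Submodule.span_eq, dite_eq_ite,
    ← h.finrank_lowDegreeImage, h.finrank_canonicalPiece_add i (by omega), hD _ (by omega)]
end

section
/- Let X ⊆ ℙⁿ_K be a zero-dimensional locally Gorenstein scheme with trace map σ for Q^h(R_X)/K[x₀, x₀⁻¹], and Dedekind different δ^σ_X = (𝔠^σ_X)⁻¹ where 𝔠^σ_X ≅ ω_{R_X}(1). Then δ^σ_X is a homogeneous ideal of R_X containing x₀^{2r_X}, its Hilbert function satisfies HF_{δ^σ_X}(i) = 0 for i < 0, HF_{δ^σ_X}(i) = deg(X) for i ≥ 2r_X, is non-decreasing on [0, 2r_X], and consequently r_X ≤ ri(δ^σ_X) ≤ 2r_X. -/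
/-!
Inverting the degree-one non-zerodivisor `x₀` makes `R` into a ℤ-graded ring `Q` whose degree-`m`
part is `x₀^(m - r) A_r`, because multiplication by `x₀` maps `A_i` onto `A_(i+1)` for `i ≥ r`.
Thus `Q` is free over `L₀ = K[x₀, x₀⁻¹]` on a basis of `A_r`, and the trace property of `σ` makes
`(w, q) ↦ σ (w q)` nondegenerate. As `σ` has degree `0` and `σ (A_k) ⊆ L₀ ∩ Q_k = K x₀^k`, we get
`1 ∈ 𝔠`, and `𝔠` is homogeneous. A homogeneous `c ∈ 𝔠` of degree `m < -r` sends `A_r`, hence all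
of `Q = L₀ A_r`, into `K[x₀]` in negative degree, i.e. to `0`; so `c = 0`. Therefore `𝔠` lives in
degrees `≥ -r`, and `A_i 𝔠` lies in degrees `≥ r`, where `Q` agrees with `R`, once `i ≥ 2r`.
Since `1 ∈ 𝔠`, `δ ⊆ R`, and `δ` is homogeneous along with `𝔠`. Its Hilbert function is that of
the homogeneous ideal `δ ∩ R`: non-decreasing since `x₀` is a non-zerodivisor, equal to `D` from
`2r` on, and below `D` before `r` because `HF_R` is.
-/

set_option synthInstance.maxHeartbeats 1000000
set_option maxHeartbeats 1000000

/-- The degree-m homogeneous part of the homogeneous ring of quotients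
Q = Q^h(R_X), modelled as the localization of R at the degree-1
non-zerodivisor x₀:  q is homogeneous of degree m iff x₀ⁿ·q comes from
R_{n+m} for some n. -/
def QPiece {K R Q : Type*} [Field K] [CommRing R] [Algebra K R]
    [CommRing Q] [Algebra R Q]
    (A : ℕ → Submodule K R) (x₀ : R) (m : ℤ) : Set Q :=
  {q | ∃ n k : ℕ, (k : ℤ) = (n : ℤ) + m ∧
        algebraMap R Q x₀ ^ n * q ∈ algebraMap R Q '' (A k : Set R)}

/-- The polynomial subalgebra K[x₀] of Q. -/
def PolyPart (K : Type*) {R Q : Type*} [Field K] [CommRing R] [Algebra K R]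
    [CommRing Q] [Algebra R Q] [Algebra K Q] (x₀ : R) : Subalgebra K Q :=
  Algebra.adjoin K {algebraMap R Q x₀}

/-- The Laurent subalgebra L₀ = K[x₀, x₀⁻¹] of Q. -/
noncomputable def LaurentPart (K : Type*) {R Q : Type*} [Field K] [CommRing R]
    [Algebra K R] [CommRing Q] [Algebra R Q] [Algebra K Q] (x₀ : R)
    [IsLocalization.Away x₀ Q] : Subalgebra K Q :=
  Algebra.adjoin K {algebraMap R Q x₀, IsLocalization.Away.invSelf x₀}

/-- The Dedekind complementary module 𝔠^σ_X ⊆ Q^h(R_X): the image of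
ω_{R_X}(1) = Hom_{K[x₀]}(R_X, K[x₀]) in Q under φ ↦ q where φ = q·σ, i.e.
the set of q ∈ Q such that the L₀-linear map (q·σ) maps R into K[x₀]. -/
def CompMod {K R Q : Type*} [Field K] [CommRing R] [Algebra K R]
    [CommRing Q] [Algebra R Q] [Algebra K Q] (x₀ : R) (s : Q →ₗ[K] Q) : Set Q :=
  {q | ∀ f : R, s (q * algebraMap R Q f) ∈ PolyPart K x₀ (Q := Q)}

/-- The Dedekind different δ^σ_X = (𝔠^σ_X)⁻¹ = {q ∈ Q | q·𝔠^σ_X ⊆ R_X}. -/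
def DedekindDiff {K R Q : Type*} [Field K] [CommRing R] [Algebra K R]
    [CommRing Q] [Algebra R Q] [Algebra K Q] (x₀ : R) (s : Q →ₗ[K] Q) : Set Q :=
  {q | ∀ c ∈ CompMod x₀ s, q * c ∈ Set.range (algebraMap R Q)}

/-- Hilbert function of the Dedekind different in degree i: the dimension of
its degree-i homogeneous piece (a K-subspace of Q, obtained via span). -/
noncomputable def HFdiff {K R Q : Type*} [Field K] [CommRing R] [Algebra K R]
    [CommRing Q] [Algebra R Q] [Algebra K Q]
    (A : ℕ → Submodule K R) (x₀ : R) (s : Q →ₗ[K] Q) (i : ℤ) : ℕ :=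
  Module.finrank K
    (Submodule.span K (DedekindDiff (K := K) (Q := Q) x₀ s ∩ QPiece (Q := Q) A x₀ i))

open DirectSum Module

section GradedDecomposition

variable {ι κ M σM : Type*} [DecidableEq ι] [AddCommMonoid M] [SetLike σM M]
  [AddSubmonoidClass σM M] (ℳ : ι → σM) [Decomposition ℳ]

theorem eq_zero_of_sum_eq_zero_of_mem {s : Finset κ} {d : κ → ι} (hd : Set.InjOn d s)
    {g : κ → M} (hg : ∀ k ∈ s, g k ∈ ℳ (d k)) (hsum : ∑ k ∈ s, g k = 0) :
    ∀ k ∈ s, g k = 0 := by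
  intro k hk
  have := congrArg (fun x ↦ (decompose ℳ x (d k) : M)) hsum
  simp only [decompose_sum, DirectSum.sum_apply, AddSubmonoidClass.coe_finsetSum,
    decompose_zero, DirectSum.zero_apply, ZeroMemClass.coe_zero] at this
  rwa [Finset.sum_eq_single k (fun k' hk' hne ↦ decompose_of_mem_ne ℳ (hg k' hk')
    (fun h ↦ hne (hd hk' hk h))) (fun h ↦ absurd hk h), decompose_of_mem_same ℳ (hg k hk)] at this

variable {ι' N σN F : Type*} [DecidableEq ι'] [AddCommMonoid N] [SetLike σN N]
  [AddSubmonoidClass σN N] (𝒩 : ι' → σN) [Decomposition 𝒩] [FunLike F M N]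
  [AddMonoidHomClass F M N] {f : F} {e : ι → ι'}

theorem decompose_map_apply_of_injective (hf : ∀ i, ∀ x ∈ ℳ i, f x ∈ 𝒩 (e i))
    (he : Function.Injective e) (x : M) (i : ι) :
    (decompose 𝒩 (f x) (e i) : N) = f (decompose ℳ x i) := by
  induction x using DirectSum.Decomposition.inductionOn ℳ with
  | zero => simp
  | @homogeneous k x =>
    by_cases hki : k = i
    · subst hki
      rw [decompose_of_mem_same _ (hf k x x.2), decompose_coe, of_eq_same]
    · rw [decompose_of_mem_ne _ (hf k x x.2) (he.ne hki), decompose_coe,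
        of_eq_of_ne _ _ _ (Ne.symm hki), ZeroMemClass.coe_zero, map_zero]
  | add x y hx hy => simp [hx, hy]

theorem decompose_map_apply_eq_zero (hf : ∀ i, ∀ x ∈ ℳ i, f x ∈ 𝒩 (e i)) (x : M) {j : ι'}
    (hj : j ∉ Set.range e) : (decompose 𝒩 (f x) j : N) = 0 := by
  induction x using DirectSum.Decomposition.inductionOn ℳ with
  | zero => simp
  | @homogeneous k x => exact decompose_of_mem_ne _ (hf k x x.2) fun h ↦ hj ⟨k, h⟩
  | add x y hx hy => simp [hx, hy]

end GradedDecomposition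

theorem decompose_mem_span_of_mem_span {K ι κ M : Type*} [Semiring K] [DecidableEq ι]
    [AddCommMonoid M] [Module K M] (ℳ : ι → Submodule K M) [Decomposition ℳ] {v : κ → M}
    {d : κ → ι} (hv : ∀ k, v k ∈ ℳ (d k)) {x : M} (hx : x ∈ Submodule.span K (Set.range v))
    (i : ι) : (decompose ℳ x i : M) ∈ Submodule.span K (v '' {k | d k = i}) := by
  induction hx using Submodule.span_induction with
  | mem x hx =>
    obtain ⟨k, rfl⟩ := hx
    by_cases hk : d k = i
    · subst hk
      rw [decompose_of_mem_same _ (hv k)]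
      exact Submodule.subset_span ⟨k, rfl, rfl⟩
    · rw [decompose_of_mem_ne _ (hv k) hk]
      exact zero_mem _
  | zero => simp
  | add x y _ _ hx hy => simpa using add_mem hx hy
  | smul c x _ hx =>
    rw [decompose_smul, DirectSum.smul_apply, SetLike.val_smul]
    exact Submodule.smul_mem _ c hx

lemma map_mul_of_mem_adjoin {K Q : Type*} [CommSemiring K] [Semiring Q] [Algebra K Q]
    {s : Set Q} (ψ : Q →ₗ[K] Q) (hs : ∀ a ∈ s, ∀ q, ψ (a * q) = a * ψ q) {a : Q}
    (ha : a ∈ Algebra.adjoin K s) (q : Q) : ψ (a * q) = a * ψ q := by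
  induction ha using Algebra.adjoin_induction generalizing q with
  | mem a ha => exact hs a ha q
  | algebraMap c => rw [← Algebra.smul_def, ← Algebra.smul_def, map_smul]
  | add a b _ _ ha hb => rw [add_mul, map_add, ha, hb, add_mul]
  | mul a b _ _ ha hb => rw [mul_assoc, ha, hb, mul_assoc]

lemma exists_eq_pow_mul_of_mem {K R : Type*} [Semiring K] [Semiring R] [Module K R]
    {A : ℕ → Submodule K R} {x₀ : R} {r : ℕ}
    (hstab : ∀ i ≥ r, ∀ a ∈ A (i + 1), ∃ b ∈ A i, a = x₀ * b) :
    ∀ (j : ℕ), ∀ a ∈ A (r + j), ∃ b ∈ A r, a = x₀ ^ j * b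
  | 0, a, ha => ⟨a, ha, by simp⟩
  | j + 1, a, ha => by
    obtain ⟨a', ha', rfl⟩ := hstab (r + j) (by omega) a ha
    obtain ⟨b, hb, rfl⟩ := exists_eq_pow_mul_of_mem hstab j a' ha'
    exact ⟨b, hb, by rw [pow_succ', mul_assoc]⟩

lemma finrank_ideal_inf_le_of_le {K R : Type*} [Field K] [CommRing R] [Algebra K R]
    {A : ℕ → Submodule K R} [GradedAlgebra A] {x₀ : R} (hx₀ : x₀ ∈ A 1)
    (hx₀' : x₀ ∈ nonZeroDivisors R) (J : Ideal R) {k l : ℕ} [FiniteDimensional K (A l)]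
    (hkl : k ≤ l) :
    finrank K ↥(J.restrictScalars K ⊓ A k) ≤ finrank K ↥(J.restrictScalars K ⊓ A l) := by
  have hmaps : ∀ g ∈ J.restrictScalars K ⊓ A k,
      LinearMap.mulLeft K (x₀ ^ (l - k)) g ∈ J.restrictScalars K ⊓ A l := by
    rintro g ⟨hgJ, hgA⟩
    refine ⟨J.mul_mem_left _ hgJ, ?_⟩
    have := SetLike.mul_mem_graded (SetLike.pow_mem_graded (l - k) hx₀) hgA
    rwa [smul_eq_mul, mul_one, Nat.sub_add_cancel hkl] at this
  have : FiniteDimensional K ↥(J.restrictScalars K ⊓ A l) :=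
    Submodule.finiteDimensional_of_le inf_le_right
  refine LinearMap.finrank_le_finrank_of_injective (f := LinearMap.restrict _ hmaps) ?_
  intro g g' h
  exact Subtype.ext <| (mul_cancel_left_mem_nonZeroDivisors (pow_mem hx₀' _)).mp
    (congrArg Subtype.val h)

noncomputable def awayUnit {R : Type*} (Q : Type*) [CommRing R] [CommRing Q] [Algebra R Q]
    (x₀ : R) [IsLocalization.Away x₀ Q] : Qˣ :=
  (IsLocalization.Away.algebraMap_isUnit (S := Q) x₀).unit

section QuotientGrading

variable {K R Q : Type*} [Field K] [CommRing R] [Algebra K R] [CommRing Q] [Algebra R Q]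
  [Algebra K Q] [IsScalarTower K R Q] (A : ℕ → Submodule K R) (x₀ : R) [IsLocalization.Away x₀ Q]

@[simp]
lemma awayUnit_val : (awayUnit Q x₀ : Q) = algebraMap R Q x₀ := rfl

lemma awayUnit_zpow_natCast (n : ℕ) :
    ((awayUnit Q x₀ ^ (n : ℤ) : Qˣ) : Q) = algebraMap R Q (x₀ ^ n) := by
  simp

lemma awayUnit_inv_val :
    (((awayUnit Q x₀)⁻¹ : Qˣ) : Q) = IsLocalization.Away.invSelf (S := Q) x₀ :=
  Units.inv_eq_of_mul_eq_one_right (IsLocalization.Away.mul_invSelf x₀)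

noncomputable def pieceMap (r : ℕ) (m : ℤ) : A r →ₗ[K] Q :=
  LinearMap.mulLeft K ((awayUnit Q x₀ ^ (m - r) : Qˣ) : Q) ∘ₗ
    (Algebra.linearMap R Q).restrictScalars K ∘ₗ (A r).subtype

variable {A x₀} {r : ℕ}

lemma pieceMap_apply (m : ℤ) (a : A r) :
    pieceMap (Q := Q) A x₀ r m a = ((awayUnit Q x₀ ^ (m - r) : Qˣ) : Q) * algebraMap R Q a :=
  rfl

lemma zpow_mul_pieceMap (j m : ℤ) (a : A r) :
    ((awayUnit Q x₀ ^ j : Qˣ) : Q) * pieceMap A x₀ r m a = pieceMap A x₀ r (m + j) a := by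
  rw [pieceMap_apply, pieceMap_apply, ← mul_assoc, ← Units.val_mul, ← zpow_add]
  ring_nf

lemma algebraMap_injective_of_mem_nonZeroDivisors (hx₀ : x₀ ∈ nonZeroDivisors R) :
    Function.Injective (algebraMap R Q) :=
  IsLocalization.injective Q (M := Submonoid.powers x₀) (Submonoid.powers_le.mpr hx₀)

lemma pieceMap_injective (hx₀ : x₀ ∈ nonZeroDivisors R) (m : ℤ) :
    Function.Injective (pieceMap (Q := Q) A x₀ r m) := fun _ _ h ↦
  Subtype.ext <| algebraMap_injective_of_mem_nonZeroDivisors hx₀ <|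
    (Units.mul_right_inj _).mp h

variable (A x₀ r) in
/-- The degree-`m` part `x₀^(m - r) A_r` of `Q`; by `mem_qGrading_iff` it is `QPiece A x₀ m`. -/
noncomputable def qGrading (m : ℤ) : Submodule K Q := LinearMap.range (pieceMap A x₀ r m)

lemma pieceMap_mem_qGrading (m : ℤ) (a : A r) :
    pieceMap A x₀ r m a ∈ qGrading (Q := Q) A x₀ r m :=
  LinearMap.mem_range_self _ a

lemma zpow_mul_mem_qGrading {m : ℤ} {q : Q} (hq : q ∈ qGrading A x₀ r m) (j : ℤ) :
    ((awayUnit Q x₀ ^ j : Qˣ) : Q) * q ∈ qGrading A x₀ r (m + j) := by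
  obtain ⟨a, rfl⟩ := hq
  rw [zpow_mul_pieceMap]
  exact pieceMap_mem_qGrading _ a

lemma mem_range_of_mem_qGrading {d : ℤ} (hd : r ≤ d) {q : Q} (hq : q ∈ qGrading A x₀ r d) :
    q ∈ (algebraMap R Q).range := by
  obtain ⟨a, rfl⟩ := hq
  refine ⟨x₀ ^ (d - r).toNat * a, ?_⟩
  rw [map_mul, ← awayUnit_zpow_natCast, Int.toNat_of_nonneg (by omega), pieceMap_apply]

variable [GradedAlgebra A]

lemma zpow_mem_qGrading (hx₀ : x₀ ∈ A 1) (j : ℤ) :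
    ((awayUnit Q x₀ ^ j : Qˣ) : Q) ∈ qGrading A x₀ r j := by
  refine ⟨⟨x₀ ^ r, by simpa using SetLike.pow_mem_graded r hx₀⟩, ?_⟩
  rw [pieceMap_apply, ← awayUnit_zpow_natCast, ← Units.val_mul, ← zpow_add, sub_add_cancel]

lemma algebraMap_pow_mem_qGrading (hx₀ : x₀ ∈ A 1) (n : ℕ) :
    algebraMap R Q x₀ ^ n ∈ qGrading A x₀ r n := by
  simpa using zpow_mem_qGrading (Q := Q) (r := r) hx₀ n

lemma algebraMap_mem_qGrading (hx₀ : x₀ ∈ A 1)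
    (hstab : ∀ i ≥ r, ∀ a ∈ A (i + 1), ∃ b ∈ A i, a = x₀ * b) {k : ℕ} {a : R} (ha : a ∈ A k) :
    algebraMap R Q a ∈ qGrading A x₀ r k := by
  rcases le_or_gt r k with hrk | hkr
  · obtain ⟨b, hb, rfl⟩ :=
      exists_eq_pow_mul_of_mem hstab (k - r) a (by rwa [Nat.add_sub_cancel' hrk])
    refine ⟨⟨b, hb⟩, ?_⟩
    rw [pieceMap_apply, map_mul, ← awayUnit_zpow_natCast]
    congr 3
    omega
  · refine ⟨⟨x₀ ^ (r - k) * a, ?_⟩, ?_⟩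
    · convert SetLike.mul_mem_graded (SetLike.pow_mem_graded (r - k) hx₀) ha using 2
      simp only [smul_eq_mul, mul_one]
      omega
    · rw [pieceMap_apply, map_mul, ← awayUnit_zpow_natCast, ← mul_assoc, ← Units.val_mul,
        ← zpow_add, show (k : ℤ) - r + (r - k : ℕ) = 0 by omega, zpow_zero, Units.val_one, one_mul]

lemma exists_algebraMap_eq_pow_mul (hx₀ : x₀ ∈ A 1) {m : ℤ} {q : Q}
    (hq : q ∈ qGrading A x₀ r m) {n : ℕ} (hn : r ≤ n + m) :
    ∃ g ∈ A (n + m).toNat, algebraMap R Q x₀ ^ n * q = algebraMap R Q g := by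
  obtain ⟨a, rfl⟩ := hq
  refine ⟨x₀ ^ (n + m - r).toNat * a, ?_, ?_⟩
  · convert SetLike.mul_mem_graded (SetLike.pow_mem_graded (n + m - r).toNat hx₀) a.2 using 2
    simp only [smul_eq_mul, mul_one]
    omega
  · rw [← awayUnit_val, ← Units.val_pow_eq_pow_val, ← zpow_natCast, zpow_mul_pieceMap,
      pieceMap_apply, map_mul, ← awayUnit_zpow_natCast, Int.toNat_of_nonneg (by omega)]
    ring_nf

lemma mem_qGrading_iff (hx₀ : x₀ ∈ A 1)
    (hstab : ∀ i ≥ r, ∀ a ∈ A (i + 1), ∃ b ∈ A i, a = x₀ * b) {m : ℤ} {q : Q} :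
    q ∈ qGrading A x₀ r m ↔ q ∈ QPiece A x₀ m := by
  constructor
  · intro hq
    obtain ⟨g, hg, hgq⟩ := exists_algebraMap_eq_pow_mul hx₀ hq (n := (r - m).toNat) (by omega)
    exact ⟨(r - m).toNat, (_ + m).toNat, by omega, g, hg, hgq.symm⟩
  · rintro ⟨n, k, hk, g, hg, hgq⟩
    have := zpow_mul_mem_qGrading (algebraMap_mem_qGrading (Q := Q) hx₀ hstab hg) (-n)
    rwa [hgq, ← awayUnit_val, ← Units.val_pow_eq_pow_val, ← mul_assoc, ← Units.val_mul,
      ← zpow_natCast, ← zpow_add, neg_add_cancel, zpow_zero, Units.val_one, one_mul,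
      show (k : ℤ) + -n = m by omega] at this

lemma eq_zero_of_sum_eq_zero_of_mem_qGrading (hx₀ : x₀ ∈ A 1) (hx₀' : x₀ ∈ nonZeroDivisors R)
    {s : Finset ℤ} {w : ℤ → Q} (hw : ∀ m ∈ s, w m ∈ qGrading A x₀ r m)
    (hsum : ∑ m ∈ s, w m = 0) : ∀ m ∈ s, w m = 0 := by
  set N := s.sup fun m ↦ ((r : ℤ) - m).toNat
  have hN : ∀ m ∈ s, (r : ℤ) ≤ N + m := fun m hm ↦ by
    have := Finset.le_sup (f := fun m ↦ ((r : ℤ) - m).toNat) hm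
    omega
  -- clearing the denominator `x₀ ^ N` moves the relation into `R`
  choose! g hg hgw using fun m hm ↦ exists_algebraMap_eq_pow_mul hx₀ (hw m hm) (hN m hm)
  have hgsum : ∑ m ∈ s, g m = 0 := algebraMap_injective_of_mem_nonZeroDivisors (Q := Q) hx₀' <| by
    rw [map_sum, map_zero, ← Finset.sum_congr rfl hgw, ← Finset.mul_sum, hsum, mul_zero]
  have hinj : Set.InjOn (fun m : ℤ ↦ (N + m).toNat) s := fun m hm m' hm' h ↦ by
    have := hN m hm
    have := hN m' hm'
    simp only at h
    omega
  intro m hm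
  rw [← ((IsLocalization.Away.algebraMap_isUnit x₀).pow N).mul_right_eq_zero, hgw m hm,
    eq_zero_of_sum_eq_zero_of_mem A hinj hg hgsum m hm, map_zero]

theorem isInternal_qGrading (hx₀ : x₀ ∈ A 1) (hx₀' : x₀ ∈ nonZeroDivisors R)
    (hstab : ∀ i ≥ r, ∀ a ∈ A (i + 1), ∃ b ∈ A i, a = x₀ * b) :
    IsInternal (qGrading (Q := Q) A x₀ r) := by
  classical
  refine ⟨(injective_iff_map_eq_zero _).mpr fun v hv ↦ ?_, fun q ↦ ?_⟩
  · rw [coeAddMonoidHom_eq_dfinsuppSum, DFinsupp.sum] at hv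
    have := eq_zero_of_sum_eq_zero_of_mem_qGrading hx₀ hx₀' (fun m _ ↦ (v m).2) hv
    ext m
    by_cases hm : m ∈ v.support
    · exact this m hm
    · simpa using hm
  · obtain ⟨n, g, hg⟩ := IsLocalization.Away.surj x₀ q
    have hq : q = ((awayUnit Q x₀ ^ (-n : ℤ) : Qˣ) : Q) * algebraMap R Q g := by
      rw [← hg, ← map_pow, ← awayUnit_zpow_natCast, mul_comm, mul_assoc,
        ← Units.val_mul, ← zpow_add, add_neg_cancel, zpow_zero, Units.val_one, mul_one]
    suffices h : ∀ g : R, ((awayUnit Q x₀ ^ (-n : ℤ) : Qˣ) : Q) * algebraMap R Q g ∈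
        AddMonoidHom.mrange (DirectSum.coeAddMonoidHom (qGrading (Q := Q) A x₀ r)) by
      obtain ⟨v, hv⟩ := h g
      exact ⟨v, hv.trans hq.symm⟩
    intro g
    induction g using DirectSum.Decomposition.inductionOn A with
    | zero => simp
    | homogeneous a =>
      exact ⟨of (fun m ↦ qGrading A x₀ r m) _
        ⟨_, zpow_mul_mem_qGrading (algebraMap_mem_qGrading hx₀ hstab a.2) (-n)⟩,
        coeAddMonoidHom_of _ _ _⟩
    | add a b ha hb => simpa [mul_add] using add_mem ha hb

noncomputable abbrev qGrading.gradedAlgebra (hx₀ : x₀ ∈ A 1) (hx₀' : x₀ ∈ nonZeroDivisors R)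
    (hstab : ∀ i ≥ r, ∀ a ∈ A (i + 1), ∃ b ∈ A i, a = x₀ * b) :
    GradedAlgebra (qGrading (Q := Q) A x₀ r) where
  one_mem := by simpa using zpow_mem_qGrading (Q := Q) (r := r) hx₀ 0
  mul_mem := by
    rintro m m' - - ⟨a, rfl⟩ ⟨a', rfl⟩
    have := zpow_mul_mem_qGrading (algebraMap_mem_qGrading (Q := Q) hx₀ hstab
      (SetLike.mul_mem_graded a.2 a'.2)) (m + m' - (r + r : ℕ))
    rw [show ((r + r : ℕ) : ℤ) + (m + m' - (r + r : ℕ)) = m + m' by push_cast; ring] at this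
    rwa [pieceMap_apply, pieceMap_apply, mul_mul_mul_comm, ← Units.val_mul, ← zpow_add, ← map_mul,
      show m - r + (m' - r) = m + m' - ((r + r : ℕ) : ℤ) by push_cast; ring]
  __ := (isInternal_qGrading hx₀ hx₀' hstab).chooseDecomposition

end QuotientGrading

section LaurentPart

variable {K R Q : Type*} [Field K] [CommRing R] [Algebra K R] [CommRing Q] [Algebra R Q]
  [Algebra K Q] {x₀ : R}

lemma polyPart_eq_span : Subalgebra.toSubmodule (PolyPart K x₀ (Q := Q)) =
    Submodule.span K (Set.range fun n : ℕ ↦ algebraMap R Q x₀ ^ n) := by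
  rw [PolyPart, Algebra.adjoin_eq_span, ← Submonoid.powers_eq_closure, Submonoid.coe_powers]

variable [IsLocalization.Away x₀ Q]

lemma laurentPart_le_span : Subalgebra.toSubmodule (LaurentPart K x₀ (Q := Q)) ≤
    Submodule.span K (Set.range fun j : ℤ ↦ ((awayUnit Q x₀ ^ j : Qˣ) : Q)) := by
  rw [LaurentPart, Algebra.adjoin_eq_span]
  refine Submodule.span_mono fun x hx ↦ ?_
  induction hx using Submonoid.closure_induction with
  | mem x hx =>
    rcases hx with rfl | rfl
    · exact ⟨1, by simp⟩
    · exact ⟨-1, by simp [awayUnit_inv_val]⟩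
  | one => exact ⟨0, by simp⟩
  | mul x y _ _ hx hy =>
    obtain ⟨i, rfl⟩ := hx
    obtain ⟨j, rfl⟩ := hy
    exact ⟨i + j, by simp [zpow_add]⟩

lemma zpow_mem_laurentPart (j : ℤ) :
    ((awayUnit Q x₀ ^ j : Qˣ) : Q) ∈ LaurentPart K x₀ (Q := Q) := by
  have hu : algebraMap R Q x₀ ∈ LaurentPart K x₀ (Q := Q) := Algebra.subset_adjoin (by simp)
  have hu' : IsLocalization.Away.invSelf (S := Q) x₀ ∈ LaurentPart K x₀ (Q := Q) :=
    Algebra.subset_adjoin (by simp)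
  rcases j.eq_nat_or_neg with ⟨n, rfl | rfl⟩
  · simpa using pow_mem hu n
  · simpa [awayUnit_inv_val] using pow_mem hu' n

lemma smul_zpow_mem_polyPart (c : K) {j : ℤ} (hj : 0 ≤ j) :
    c • ((awayUnit Q x₀ ^ j : Qˣ) : Q) ∈ PolyPart K x₀ (Q := Q) := by
  lift j to ℕ using hj
  have hu : algebraMap R Q x₀ ∈ PolyPart K x₀ (Q := Q) := Algebra.subset_adjoin rfl
  rw [zpow_natCast, Units.val_pow_eq_pow_val, awayUnit_val]
  exact Subalgebra.smul_mem _ (pow_mem hu j) c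

variable [IsScalarTower K R Q] {A : ℕ → Submodule K R} [GradedAlgebra A] {r : ℕ}
  [GradedAlgebra (qGrading (Q := Q) A x₀ r)]

lemma exists_eq_smul_of_mem_laurentPart (hx₀ : x₀ ∈ A 1) {m : ℤ} {q : Q}
    (hqL : q ∈ LaurentPart K x₀ (Q := Q)) (hq : q ∈ qGrading A x₀ r m) :
    ∃ c : K, q = c • ((awayUnit Q x₀ ^ m : Qˣ) : Q) := by
  have := decompose_mem_span_of_mem_span (qGrading A x₀ r) (d := id)
    (zpow_mem_qGrading hx₀) (laurentPart_le_span hqL) m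
  rw [decompose_of_mem_same _ hq, show {j : ℤ | id j = m} = {m} from Set.ext fun _ ↦ Iff.rfl,
    Set.image_singleton, Submodule.mem_span_singleton] at this
  obtain ⟨c, hc⟩ := this
  exact ⟨c, hc.symm⟩

lemma decompose_mem_polyPart (hx₀ : x₀ ∈ A 1) {p : Q} (hp : p ∈ PolyPart K x₀ (Q := Q))
    (j : ℤ) : (decompose (qGrading A x₀ r) p j : Q) ∈ PolyPart K x₀ (Q := Q) := by
  rw [← Subalgebra.mem_toSubmodule, polyPart_eq_span] at hp ⊢
  exact Submodule.span_mono (Set.image_subset_range _ _)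
    (decompose_mem_span_of_mem_span _ (algebraMap_pow_mem_qGrading hx₀) hp j)

lemma eq_zero_of_mem_polyPart_of_neg (hx₀ : x₀ ∈ A 1) {p : Q} (hp : p ∈ PolyPart K x₀ (Q := Q))
    {j : ℤ} (hpj : p ∈ qGrading A x₀ r j) (hj : j < 0) : p = 0 := by
  rw [← Subalgebra.mem_toSubmodule, polyPart_eq_span] at hp
  have := decompose_mem_span_of_mem_span (qGrading A x₀ r) (algebraMap_pow_mem_qGrading hx₀) hp j
  rwa [decompose_of_mem_same _ hpj, show {n : ℕ | (n : ℤ) = j} = ∅ by ext; simp; omega,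
    Set.image_empty, Submodule.span_empty, Submodule.mem_bot] at this

lemma decompose_algebraMap_natCast (hx₀ : x₀ ∈ A 1)
    (hstab : ∀ i ≥ r, ∀ a ∈ A (i + 1), ∃ b ∈ A i, a = x₀ * b) (g : R) (k : ℕ) :
    (decompose (qGrading A x₀ r) (algebraMap R Q g) k : Q) = algebraMap R Q (decompose A g k) :=
  decompose_map_apply_of_injective A _ (fun _ _ ↦ algebraMap_mem_qGrading hx₀ hstab)
    Nat.cast_injective g k

lemma decompose_algebraMap_of_neg (hx₀ : x₀ ∈ A 1)
    (hstab : ∀ i ≥ r, ∀ a ∈ A (i + 1), ∃ b ∈ A i, a = x₀ * b) (g : R) {j : ℤ} (hj : j < 0) :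
    (decompose (qGrading A x₀ r) (algebraMap R Q g) j : Q) = 0 :=
  decompose_map_apply_eq_zero A _ (fun _ _ ↦ algebraMap_mem_qGrading hx₀ hstab) g
    (by rintro ⟨k, rfl⟩; omega)

lemma decompose_mem_range (hx₀ : x₀ ∈ A 1)
    (hstab : ∀ i ≥ r, ∀ a ∈ A (i + 1), ∃ b ∈ A i, a = x₀ * b) {q : Q}
    (hq : q ∈ (algebraMap R Q).range) (j : ℤ) :
    (decompose (qGrading A x₀ r) q j : Q) ∈ (algebraMap R Q).range := by
  obtain ⟨g, rfl⟩ := hq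
  rcases lt_or_ge j 0 with hj | hj
  · exact ⟨0, by rw [map_zero, decompose_algebraMap_of_neg hx₀ hstab g hj]⟩
  · lift j to ℕ using hj
    exact ⟨_, (decompose_algebraMap_natCast hx₀ hstab g j).symm⟩

end LaurentPart

section Nondegenerate

variable {K R Q : Type*} [Field K] [CommRing R] [Algebra K R] [CommRing Q] [Algebra R Q]
  [Algebra K Q] [IsScalarTower K R Q] {A : ℕ → Submodule K R} {x₀ : R}
  [IsLocalization.Away x₀ Q] {r : ℕ} [Decomposition (qGrading (Q := Q) A x₀ r)]

/-- `Q` is free over `L₀` on a basis of `A r`, so every functional `l` on `A r` extends to the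
`L₀`-linear map `x₀^(m - r) a ↦ l(a) x₀^m` from `Q` to `L₀`. -/
lemma exists_laurentLinear_apply_pieceMap (hx₀' : x₀ ∈ nonZeroDivisors R) (l : Dual K (A r)) :
    ∃ ψ : Q →ₗ[K] Q, (∀ q, ψ q ∈ LaurentPart K x₀ (Q := Q)) ∧
      (∀ a ∈ LaurentPart K x₀ (Q := Q), ∀ q, ψ (a * q) = a * ψ q) ∧
      ∀ m a, ψ (pieceMap A x₀ r m a) = l a • ((awayUnit Q x₀ ^ m : Qˣ) : Q) := by
  have b := Free.chooseBasis K (A r)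
  obtain ⟨B, hB⟩ : ∃ B : Basis (Σ _ : ℤ, Free.ChooseBasisIndex K (A r)) K Q,
      ∀ p, B p = pieceMap A x₀ r p.1 (b p.2) :=
    ⟨(Decomposition.isInternal (qGrading (Q := Q) A x₀ r)).collectedBasis
      fun m ↦ b.map (LinearEquiv.ofInjective _ (pieceMap_injective hx₀' m)),
      fun p ↦ by rw [IsInternal.collectedBasis_coe]; rfl⟩
  let f : (Σ _ : ℤ, Free.ChooseBasisIndex K (A r)) → Q :=
    fun p ↦ l (b p.2) • ((awayUnit Q x₀ ^ p.1 : Qˣ) : Q)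
  obtain ⟨ψ, hψB, hψrange⟩ : ∃ ψ : Q →ₗ[K] Q,
      (∀ p, ψ (B p) = f p) ∧ LinearMap.range ψ = Submodule.span K (Set.range f) :=
    ⟨B.constr K f, B.constr_basis K f, B.constr_range K⟩
  have hψ : ∀ m a, ψ (pieceMap A x₀ r m a) = l a • ((awayUnit Q x₀ ^ m : Qˣ) : Q) := by
    intro m
    refine LinearMap.congr_fun (f := ψ ∘ₗ pieceMap A x₀ r m)
      (g := l.smulRight ((awayUnit Q x₀ ^ m : Qˣ) : Q)) (b.ext fun i ↦ ?_)
    rw [LinearMap.comp_apply, ← hB ⟨m, i⟩, hψB, LinearMap.smulRight_apply]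
  have hshift : ∀ (j : ℤ) q, ψ (((awayUnit Q x₀ ^ j : Qˣ) : Q) * q) =
      ((awayUnit Q x₀ ^ j : Qˣ) : Q) * ψ q := by
    intro j
    refine LinearMap.congr_fun (f := ψ ∘ₗ LinearMap.mulLeft K _)
      (g := LinearMap.mulLeft K _ ∘ₗ ψ) (B.ext fun p ↦ ?_)
    rw [LinearMap.comp_apply, LinearMap.comp_apply, LinearMap.mulLeft_apply,
      LinearMap.mulLeft_apply, hB, zpow_mul_pieceMap, hψ, hψ, mul_smul_comm, ← Units.val_mul,
      ← zpow_add, add_comm j]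
  refine ⟨ψ, fun q ↦ ?_, fun a ha ↦ map_mul_of_mem_adjoin ψ ?_ ha, hψ⟩
  · have : LinearMap.range ψ ≤ Subalgebra.toSubmodule (LaurentPart K x₀ (Q := Q)) := by
      rw [hψrange, Submodule.span_le]
      rintro _ ⟨p, rfl⟩
      exact Subalgebra.smul_mem _ (zpow_mem_laurentPart p.1) _
    exact this (LinearMap.mem_range_self ψ q)
  · rintro a (rfl | rfl)
    · simpa using hshift 1
    · simpa [awayUnit_inv_val] using hshift (-1)

lemma eq_zero_of_forall_trace_mul_eq_zero (hx₀' : x₀ ∈ nonZeroDivisors R) {σ : Q →ₗ[K] Q}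
    (hσtr : ∀ ψ : Q →ₗ[K] Q, (∀ q, ψ q ∈ LaurentPart K x₀ (Q := Q)) →
        (∀ a ∈ LaurentPart K x₀ (Q := Q), ∀ q, ψ (a * q) = a * ψ q) →
        ∃ u : Q, ∀ q, ψ q = σ (u * q))
    {m : ℤ} {w : Q} (hw : w ∈ qGrading A x₀ r m) (h : ∀ q, σ (w * q) = 0) : w = 0 := by
  obtain ⟨a, rfl⟩ := hw
  by_contra hw0
  have : Nontrivial Q := nontrivial_of_ne _ _ hw0
  obtain ⟨l, hl⟩ := Projective.exists_dual_ne_zero K fun ha : a = 0 ↦ hw0 (by rw [ha, map_zero])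
  obtain ⟨ψ, hψL, hψlin, hψ⟩ := exists_laurentLinear_apply_pieceMap (Q := Q) hx₀' l
  obtain ⟨u, hu⟩ := hσtr ψ hψL hψlin
  have := hψ m a
  rw [hu, mul_comm, h, eq_comm, smul_eq_zero] at this
  exact this.elim hl (Units.ne_zero _)

end Nondegenerate

section Dedekind

variable {K R Q : Type*} [Field K] [CommRing R] [Algebra K R] [CommRing Q] [Algebra R Q]
  [Algebra K Q] [IsScalarTower K R Q] {A : ℕ → Submodule K R} [GradedAlgebra A]
  {x₀ : R} [IsLocalization.Away x₀ Q] {r : ℕ} [GradedAlgebra (qGrading (Q := Q) A x₀ r)]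
  {σ : Q →ₗ[K] Q}

lemma one_mem_compMod (hx₀ : x₀ ∈ A 1)
    (hstab : ∀ i ≥ r, ∀ a ∈ A (i + 1), ∃ b ∈ A i, a = x₀ * b)
    (hσL : ∀ q : Q, σ q ∈ LaurentPart K x₀ (Q := Q))
    (hσ0 : ∀ m : ℤ, ∀ q ∈ qGrading A x₀ r m, σ q ∈ qGrading A x₀ r m) :
    (1 : Q) ∈ CompMod x₀ σ := by
  intro f
  rw [one_mul]
  induction f using DirectSum.Decomposition.inductionOn A with
  | zero => simp
  | @homogeneous k f =>
    obtain ⟨c, hc⟩ := exists_eq_smul_of_mem_laurentPart hx₀ (hσL _)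
      (hσ0 _ _ (algebraMap_mem_qGrading hx₀ hstab f.2))
    rw [hc]
    exact smul_zpow_mem_polyPart c (Int.natCast_nonneg k)
  | add f g hf hg => simpa using add_mem hf hg

lemma decompose_mem_compMod (hx₀ : x₀ ∈ A 1)
    (hstab : ∀ i ≥ r, ∀ a ∈ A (i + 1), ∃ b ∈ A i, a = x₀ * b)
    (hσ0 : ∀ m : ℤ, ∀ q ∈ qGrading A x₀ r m, σ q ∈ qGrading A x₀ r m)
    {c : Q} (hc : c ∈ CompMod x₀ σ) (m : ℤ) :
    (decompose (qGrading A x₀ r) c m : Q) ∈ CompMod x₀ σ := by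
  intro f
  induction f using DirectSum.Decomposition.inductionOn A with
  | zero => simp
  | @homogeneous k f =>
    rw [← coe_decompose_mul_add_of_right_mem _ (algebraMap_mem_qGrading hx₀ hstab f.2),
      ← decompose_map_apply_of_injective _ _ hσ0 Function.injective_id]
    exact decompose_mem_polyPart hx₀ (hc f) _
  | add f g hf hg => simpa [mul_add] using add_mem hf hg

lemma decompose_eq_zero_of_mem_compMod (hx₀ : x₀ ∈ A 1) (hx₀' : x₀ ∈ nonZeroDivisors R)
    (hstab : ∀ i ≥ r, ∀ a ∈ A (i + 1), ∃ b ∈ A i, a = x₀ * b)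
    (hσlin : ∀ a ∈ LaurentPart K x₀ (Q := Q), ∀ q : Q, σ (a * q) = a * σ q)
    (hσ0 : ∀ m : ℤ, ∀ q ∈ qGrading A x₀ r m, σ q ∈ qGrading A x₀ r m)
    (hσtr : ∀ ψ : Q →ₗ[K] Q, (∀ q, ψ q ∈ LaurentPart K x₀ (Q := Q)) →
        (∀ a ∈ LaurentPart K x₀ (Q := Q), ∀ q, ψ (a * q) = a * ψ q) →
        ∃ u : Q, ∀ q, ψ q = σ (u * q))
    {c : Q} (hc : c ∈ CompMod x₀ σ) {m : ℤ} (hm : m < -r) :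
    (decompose (qGrading A x₀ r) c m : Q) = 0 := by
  classical
  refine eq_zero_of_forall_trace_mul_eq_zero hx₀' hσtr (decompose _ c m).2 fun q ↦ ?_
  rw [← sum_support_decompose (qGrading A x₀ r) q, Finset.mul_sum, map_sum]
  refine Finset.sum_eq_zero fun k _ ↦ ?_
  obtain ⟨a, ha⟩ := (decompose (qGrading A x₀ r) q k).2
  -- `σ (c_m a)` is a polynomial in `x₀` of negative degree `m + r`
  have hca : σ (decompose (qGrading A x₀ r) c m * algebraMap R Q a) = 0 :=
    eq_zero_of_mem_polyPart_of_neg hx₀ (decompose_mem_compMod hx₀ hstab hσ0 hc m a)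
      (hσ0 _ _ (SetLike.mul_mem_graded (decompose _ c m).2
        (algebraMap_mem_qGrading hx₀ hstab a.2))) (by omega)
  rw [← ha, pieceMap_apply, mul_left_comm, hσlin _ (zpow_mem_laurentPart _), hca, mul_zero]

lemma algebraMap_mem_dedekindDiff (hx₀ : x₀ ∈ A 1) (hx₀' : x₀ ∈ nonZeroDivisors R)
    (hstab : ∀ i ≥ r, ∀ a ∈ A (i + 1), ∃ b ∈ A i, a = x₀ * b)
    (hσlin : ∀ a ∈ LaurentPart K x₀ (Q := Q), ∀ q : Q, σ (a * q) = a * σ q)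
    (hσ0 : ∀ m : ℤ, ∀ q ∈ qGrading A x₀ r m, σ q ∈ qGrading A x₀ r m)
    (hσtr : ∀ ψ : Q →ₗ[K] Q, (∀ q, ψ q ∈ LaurentPart K x₀ (Q := Q)) →
        (∀ a ∈ LaurentPart K x₀ (Q := Q), ∀ q, ψ (a * q) = a * ψ q) →
        ∃ u : Q, ∀ q, ψ q = σ (u * q))
    {i : ℕ} (hi : 2 * r ≤ i) {g : R} (hg : g ∈ A i) :
    algebraMap R Q g ∈ DedekindDiff x₀ σ := by
  classical
  intro c hc
  show _ ∈ (algebraMap R Q).range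
  rw [← sum_support_decompose (qGrading A x₀ r) c, Finset.mul_sum]
  refine Subring.sum_mem _ fun m _ ↦ ?_
  rcases lt_or_ge m (-r) with hm | hm
  · rw [decompose_eq_zero_of_mem_compMod hx₀ hx₀' hstab hσlin hσ0 hσtr hc hm, mul_zero]
    exact zero_mem _
  · exact mem_range_of_mem_qGrading (by omega) (SetLike.mul_mem_graded
      (algebraMap_mem_qGrading hx₀ hstab hg) (decompose _ c m).2)

variable (x₀ σ) in
def dedekindDiffSubmodule : Submodule R Q where
  carrier := DedekindDiff x₀ σ
  add_mem' {q q'} hq hq' c hc := by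
    show _ ∈ (algebraMap R Q).range
    rw [add_mul]
    exact add_mem (hq c hc) (hq' c hc)
  zero_mem' c _ := ⟨0, by simp⟩
  smul_mem' g q hq c hc := by
    show _ ∈ (algebraMap R Q).range
    rw [Algebra.smul_def, mul_assoc]
    exact mul_mem ⟨g, rfl⟩ (hq c hc)

lemma dedekindDiffSubmodule_isHomogeneous (hx₀ : x₀ ∈ A 1)
    (hstab : ∀ i ≥ r, ∀ a ∈ A (i + 1), ∃ b ∈ A i, a = x₀ * b)
    (hσ0 : ∀ m : ℤ, ∀ q ∈ qGrading A x₀ r m, σ q ∈ qGrading A x₀ r m) :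
    (dedekindDiffSubmodule x₀ σ).IsHomogeneous (qGrading A x₀ r) := by
  classical
  intro d q hq c hc
  show _ ∈ (algebraMap R Q).range
  rw [← sum_support_decompose (qGrading A x₀ r) c, Finset.mul_sum]
  refine Subring.sum_mem _ fun m _ ↦ ?_
  rw [← coe_decompose_mul_add_of_right_mem _ (decompose _ c m).2]
  exact decompose_mem_range hx₀ hstab (hq _ (decompose_mem_compMod hx₀ hstab hσ0 hc m)) _

variable (x₀ σ) in
def dedekindDiffIdeal : Ideal R := (dedekindDiffSubmodule x₀ σ).comap (Algebra.linearMap R Q)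

lemma dedekindDiffIdeal_isHomogeneous (hx₀ : x₀ ∈ A 1)
    (hstab : ∀ i ≥ r, ∀ a ∈ A (i + 1), ∃ b ∈ A i, a = x₀ * b)
    (hσ0 : ∀ m : ℤ, ∀ q ∈ qGrading A x₀ r m, σ q ∈ qGrading A x₀ r m) :
    (dedekindDiffIdeal x₀ σ).IsHomogeneous A := by
  intro k f hf
  show algebraMap R Q _ ∈ DedekindDiff x₀ σ
  rw [← decompose_algebraMap_natCast hx₀ hstab]
  exact dedekindDiffSubmodule_isHomogeneous hx₀ hstab hσ0 _ hf

end Dedekind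

section HilbertFunction

variable {K R Q : Type*} [Field K] [CommRing R] [Algebra K R] [CommRing Q] [Algebra R Q]
  [Algebra K Q] [IsScalarTower K R Q] {A : ℕ → Submodule K R} [GradedAlgebra A]
  {x₀ : R} [IsLocalization.Away x₀ Q] {r : ℕ} [GradedAlgebra (qGrading (Q := Q) A x₀ r)]
  {σ : Q →ₗ[K] Q}

lemma dedekindDiff_inter_qPiece_natCast (hx₀ : x₀ ∈ A 1)
    (hstab : ∀ i ≥ r, ∀ a ∈ A (i + 1), ∃ b ∈ A i, a = x₀ * b)
    (h1 : (1 : Q) ∈ CompMod x₀ σ) (k : ℕ) :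
    DedekindDiff x₀ σ ∩ QPiece A x₀ k = ((dedekindDiffIdeal x₀ σ).restrictScalars K ⊓ A k).map
      ((Algebra.linearMap R Q).restrictScalars K) := by
  ext q
  constructor
  · rintro ⟨hqδ, hqk⟩
    obtain ⟨g, rfl⟩ : q ∈ Set.range (algebraMap R Q) := by simpa using hqδ 1 h1
    have hg := decompose_algebraMap_natCast (Q := Q) hx₀ hstab g k
    rw [decompose_of_mem_same _ ((mem_qGrading_iff hx₀ hstab).mpr hqk)] at hg
    exact ⟨_, ⟨show algebraMap R Q _ ∈ DedekindDiff x₀ σ from hg ▸ hqδ, SetLike.coe_mem _⟩,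
      hg.symm⟩
  · rintro ⟨g, ⟨hgJ, hgA⟩, rfl⟩
    exact ⟨hgJ, (mem_qGrading_iff hx₀ hstab).mp (algebraMap_mem_qGrading hx₀ hstab hgA)⟩

lemma hfDiff_natCast (hx₀ : x₀ ∈ A 1) (hx₀' : x₀ ∈ nonZeroDivisors R)
    (hstab : ∀ i ≥ r, ∀ a ∈ A (i + 1), ∃ b ∈ A i, a = x₀ * b)
    (h1 : (1 : Q) ∈ CompMod x₀ σ) (k : ℕ) :
    HFdiff A x₀ σ k = finrank K ↥((dedekindDiffIdeal x₀ σ).restrictScalars K ⊓ A k) := by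
  rw [HFdiff, dedekindDiff_inter_qPiece_natCast hx₀ hstab h1, Submodule.span_eq]
  exact (Submodule.equivMapOfInjective _
    (algebraMap_injective_of_mem_nonZeroDivisors (Q := Q) hx₀') _).finrank_eq.symm

lemma hfDiff_of_neg (hx₀ : x₀ ∈ A 1)
    (hstab : ∀ i ≥ r, ∀ a ∈ A (i + 1), ∃ b ∈ A i, a = x₀ * b)
    (h1 : (1 : Q) ∈ CompMod x₀ σ) {j : ℤ} (hj : j < 0) : HFdiff A x₀ σ j = 0 := by
  rw [HFdiff, Submodule.span_eq_bot.mpr, finrank_bot]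
  rintro q ⟨hqδ, hqj⟩
  obtain ⟨g, rfl⟩ : q ∈ Set.range (algebraMap R Q) := by simpa using hqδ 1 h1
  rw [← decompose_of_mem_same _ ((mem_qGrading_iff hx₀ hstab).mpr hqj),
    decompose_algebraMap_of_neg hx₀ hstab g hj]

lemma hfDiff_mono (hx₀ : x₀ ∈ A 1) (hx₀' : x₀ ∈ nonZeroDivisors R)
    (hstab : ∀ i ≥ r, ∀ a ∈ A (i + 1), ∃ b ∈ A i, a = x₀ * b) (h1 : (1 : Q) ∈ CompMod x₀ σ)
    [∀ i, FiniteDimensional K (A i)] {i j : ℤ} (hi : 0 ≤ i) (hij : i ≤ j) :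
    HFdiff A x₀ σ i ≤ HFdiff A x₀ σ j := by
  lift i to ℕ using hi
  lift j to ℕ using by omega
  rw [hfDiff_natCast hx₀ hx₀' hstab h1, hfDiff_natCast hx₀ hx₀' hstab h1]
  exact finrank_ideal_inf_le_of_le hx₀ hx₀' _ (by omega)

end HilbertFunction

theorem dedekindDifferent_basic_properties_general
    (K R Q : Type) [Field K] [CommRing R] [Algebra K R] [CommRing Q]
    [Algebra R Q] [Algebra K Q] [IsScalarTower K R Q]
    (A : ℕ → Submodule K R) [GradedAlgebra A]
    [∀ i, FiniteDimensional K (A i)]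
    (x₀ : R) (hx₀ : x₀ ∈ A 1)
    (hnzd : ∀ a : R, x₀ * a = 0 → a = 0)
    [IsLocalization.Away x₀ Q]
    (D rX : ℕ) (hDpos : 0 < D)
    (hD : ∀ i ≥ rX, Module.finrank K (A i) = D)
    (hstrict : ∀ i < rX, Module.finrank K (A i) < D)
    (hstab : ∀ i ≥ rX, ∀ a ∈ A (i + 1), ∃ b ∈ A i, a = x₀ * b)
    -- σ is a homogeneous trace map of degree 0 for Q^h(R_X)/L₀; its existence
    -- expresses that X is locally Gorenstein.
    (σ : Q →ₗ[K] Q)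
    (hσL : ∀ q : Q, σ q ∈ LaurentPart K x₀ (Q := Q))
    (hσlin : ∀ a ∈ LaurentPart K x₀ (Q := Q), ∀ q : Q, σ (a * q) = a * σ q)
    (hσ0 : ∀ m : ℤ, ∀ q ∈ QPiece (Q := Q) A x₀ m, σ q ∈ QPiece (Q := Q) A x₀ m)
    (hσtr : ∀ ψ : Q →ₗ[K] Q, (∀ q, ψ q ∈ LaurentPart K x₀ (Q := Q)) →
        (∀ a ∈ LaurentPart K x₀ (Q := Q), ∀ q, ψ (a * q) = a * ψ q) →
        ∃ u : Q, ∀ q, ψ q = σ (u * q))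
    :
    (∀ q ∈ DedekindDiff (Q := Q) x₀ σ, q ∈ Set.range (algebraMap R Q)) ∧
    (∃ J : Ideal R,
        (∀ f : R, f ∈ J ↔ algebraMap R Q f ∈ DedekindDiff (Q := Q) x₀ σ) ∧
        (∀ f ∈ J, ∀ i : ℕ, (DirectSum.decompose A f i : R) ∈ J)) ∧
    (algebraMap R Q (x₀ ^ (2 * rX)) ∈ DedekindDiff (Q := Q) x₀ σ) ∧
    (∀ i : ℤ, i < 0 → HFdiff (Q := Q) A x₀ σ i = 0) ∧
    (∀ i : ℤ, (2 * rX : ℤ) ≤ i → HFdiff (Q := Q) A x₀ σ i = D) ∧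
    (∀ i j : ℤ, 0 ≤ i → i ≤ j → HFdiff (Q := Q) A x₀ σ i ≤ HFdiff (Q := Q) A x₀ σ j) ∧
    (∀ i : ℤ, i < (rX : ℤ) → ∃ j ≥ i, HFdiff (Q := Q) A x₀ σ j ≠ D) := by
  have hx₀' : x₀ ∈ nonZeroDivisors R := mem_nonZeroDivisors_iff_left.mpr hnzd
  let := qGrading.gradedAlgebra (Q := Q) hx₀ hx₀' hstab
  have hσ0' : ∀ m : ℤ, ∀ q ∈ qGrading A x₀ rX m, σ q ∈ qGrading A x₀ rX m := fun m q hq ↦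
    (mem_qGrading_iff hx₀ hstab).mpr (hσ0 m q ((mem_qGrading_iff hx₀ hstab).mp hq))
  have h1 := one_mem_compMod hx₀ hstab hσL hσ0'
  have hbig : ∀ i : ℕ, 2 * rX ≤ i → A i ≤ (dedekindDiffIdeal x₀ σ).restrictScalars K :=
    fun i hi _ ↦ algebraMap_mem_dedekindDiff hx₀ hx₀' hstab hσlin hσ0' hσtr hi
  have hHF := hfDiff_natCast hx₀ hx₀' hstab h1
  refine ⟨fun q hq ↦ by simpa using hq 1 h1,
    ⟨dedekindDiffIdeal x₀ σ, fun f ↦ Iff.rfl,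
      fun f hf i ↦ dedekindDiffIdeal_isHomogeneous hx₀ hstab hσ0' i hf⟩,
    hbig _ le_rfl (by simpa using SetLike.pow_mem_graded (2 * rX) hx₀),
    fun i hi ↦ hfDiff_of_neg hx₀ hstab h1 hi, fun i hi ↦ ?_,
    fun i j hi hij ↦ hfDiff_mono hx₀ hx₀' hstab h1 hi hij, fun i hi ↦ ?_⟩
  · lift i to ℕ using by omega
    rw [hHF, inf_eq_right.mpr (hbig i (by omega)), hD i (by omega)]
  · refine ⟨i, le_rfl, ?_⟩
    rcases lt_or_ge i 0 with hneg | hpos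
    · rw [hfDiff_of_neg hx₀ hstab h1 hneg]
      omega
    · lift i to ℕ using hpos
      rw [hHF]
      exact ((Submodule.finrank_mono inf_le_right).trans_lt (hstrict i (by omega))).ne

theorem dedekindDifferent_basic_properties
    (K R Q : Type) [Field K] [CommRing R] [Algebra K R] [CommRing Q]
    [Algebra R Q] [Algebra K Q] [IsScalarTower K R Q]
    (A : ℕ → Submodule K R) [GradedAlgebra A]
    [∀ i, FiniteDimensional K (A i)]
    (x₀ : R) (hx₀ : x₀ ∈ A 1)
    (hnzd : ∀ a : R, x₀ * a = 0 → a = 0)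
    [IsLocalization.Away x₀ Q]
    (D rX : ℕ) (hDpos : 0 < D)
    (hD : ∀ i ≥ rX, Module.finrank K (A i) = D)
    (hstrict : ∀ i < rX, Module.finrank K (A i) < D)
    (hmono : ∀ i : ℕ, Module.finrank K (A i) ≤ Module.finrank K (A (i + 1)))
    (hstab : ∀ i ≥ rX, ∀ a ∈ A (i + 1), ∃ b ∈ A i, a = x₀ * b)
    -- σ is a homogeneous trace map of degree 0 for Q^h(R_X)/L₀; its existence
    -- expresses that X is locally Gorenstein.
    (σ : Q →ₗ[K] Q)
    (hσL : ∀ q : Q, σ q ∈ LaurentPart K x₀ (Q := Q))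
    (hσlin : ∀ a ∈ LaurentPart K x₀ (Q := Q), ∀ q : Q, σ (a * q) = a * σ q)
    (hσ0 : ∀ m : ℤ, ∀ q ∈ QPiece (Q := Q) A x₀ m, σ q ∈ QPiece (Q := Q) A x₀ m)
    (hσtr : ∀ ψ : Q →ₗ[K] Q, (∀ q, ψ q ∈ LaurentPart K x₀ (Q := Q)) →
        (∀ a ∈ LaurentPart K x₀ (Q := Q), ∀ q, ψ (a * q) = a * ψ q) →
        ∃ u : Q, ∀ q, ψ q = σ (u * q))
    :
    (∀ q ∈ DedekindDiff (Q := Q) x₀ σ, q ∈ Set.range (algebraMap R Q)) ∧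
    (∃ J : Ideal R,
        (∀ f : R, f ∈ J ↔ algebraMap R Q f ∈ DedekindDiff (Q := Q) x₀ σ) ∧
        (∀ f ∈ J, ∀ i : ℕ, (DirectSum.decompose A f i : R) ∈ J)) ∧
    (algebraMap R Q (x₀ ^ (2 * rX)) ∈ DedekindDiff (Q := Q) x₀ σ) ∧
    (∀ i : ℤ, i < 0 → HFdiff (Q := Q) A x₀ σ i = 0) ∧
    (∀ i : ℤ, (2 * rX : ℤ) ≤ i → HFdiff (Q := Q) A x₀ σ i = D) ∧
    (∀ i j : ℤ, 0 ≤ i → i ≤ j → HFdiff (Q := Q) A x₀ σ i ≤ HFdiff (Q := Q) A x₀ σ j) ∧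
    (∀ i : ℤ, i < (rX : ℤ) → ∃ j ≥ i, HFdiff (Q := Q) A x₀ σ j ≠ D) :=
  dedekindDifferent_basic_properties_general K R Q A x₀ hx₀ hnzd D rX hDpos hD hstrict hstab σ hσL
    hσlin hσ0 hσtr
end
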